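/- Let T be a rooted tree with positive edge lengths in which every non-root edge has length at most half the length of its parent edge, and let d denote its shortest-path metric. Replace the length ℓ_e of each edge e by ℓ'_e = 2^{⌊log₂ ℓ_e⌋} (the largest power of 2 that is at most ℓ_e), and let d' denote the resulting shortest-path metric. Then: (i) for every non-root edge e with parent edge e', the new lengths satisfy ℓ'_e ≤ ℓ'_{e'}/2, and the ratio ℓ'_{e'}/ℓ'_e is a power of 2; and (ii) for every pair of vertices u,v: d'(u,v) ≤ d(u,v) ≤ 2·d'(u,v). -/
import Mathlib


open scoped Classical

/-- A finite rooted tree, encoded by a parent function together with a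
consistent depth function. Edge lengths are given separately: `len v` is the
length of the edge from `v` to its parent (irrelevant at the root). -/
structure FinRootedTree where
  V : Type
  finiteV : Finite V
  root : V
  parent : V → V
  depth : V → ℕ
  parent_root : parent root = root
  depth_root : depth root = 0
  depth_parent : ∀ v, v ≠ root → depth v = depth (parent v) + 1

/-- Auxiliary fueled recursion computing the distance from a vertex to the root. -/
noncomputable def distAux (T : FinRootedTree) (len : T.V → ℝ) : ℕ → T.V → ℝ
  | 0, _ => 0
  | n + 1, v => if v = T.root then 0 else len v + distAux T len n (T.parent v)

/-- Distance from a vertex to the root (sum of edge lengths on the root path). -/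
noncomputable def distToRoot (T : FinRootedTree) (len : T.V → ℝ) (v : T.V) : ℝ :=
  distAux T len (T.depth v) v

/-- `a` is an ancestor of `v` (possibly `a = v`). -/
def IsAnc (T : FinRootedTree) (a v : T.V) : Prop := ∃ k : ℕ, T.parent^[k] v = a

/-- The shortest-path metric of the tree with edge lengths `len`:
`d(u,v) = dtr(u) + dtr(v) - 2·dtr(lca u v)`, the lca being the common ancestor
furthest from the root. -/
noncomputable def treeDist (T : FinRootedTree) (len : T.V → ℝ) (u v : T.V) : ℝ :=
  distToRoot T len u + distToRoot T len v -
    2 * sSup (distToRoot T len '' {a : T.V | IsAnc T a u ∧ IsAnc T a v})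

/-- A leaf: a vertex with no children. -/
def IsLeaf (T : FinRootedTree) (v : T.V) : Prop := ∀ u : T.V, T.parent u = v → u = v

/-- The HST condition on edge lengths: positive lengths, and every non-root
edge is at most half as long as its parent edge. -/
def IsHSTLen (T : FinRootedTree) (len : T.V → ℝ) : Prop :=
  (∀ v, v ≠ T.root → 0 < len v) ∧
  (∀ v, v ≠ T.root → T.parent v ≠ T.root → len v ≤ len (T.parent v) / 2)

/-- Round a length down to the largest power of `2` not exceeding it. -/
noncomputable def roundLen {V : Type} (len : V → ℝ) (v : V) : ℝ :=
  (2 : ℝ) ^ Int.log 2 (len v)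

section HSTAux

variable (T : FinRootedTree) (len : T.V → ℝ)

lemma depth_zero_eq_root (v : T.V) (h : T.depth v = 0) : v = T.root := by
  by_contra hv
  have := T.depth_parent v hv
  omega

lemma iter_depth_root : ∀ n (v : T.V), T.depth v = n → T.parent^[n] v = T.root := by
  intro n
  induction n with
  | zero => intro v h; simpa using depth_zero_eq_root T v h
  | succ n ih =>
    intro v h
    have hv : v ≠ T.root := by
      intro hv; rw [hv, T.depth_root] at h; omega
    have hd := T.depth_parent v hv
    rw [Function.iterate_succ_apply]
    exact ih _ (by omega)

lemma dtr_root : distToRoot T len T.root = 0 := by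
  unfold distToRoot
  rw [T.depth_root]
  rfl

lemma distAux_stable : ∀ n (v : T.V), T.depth v ≤ n →
    distAux T len n v = distToRoot T len v := by
  intro n
  induction n with
  | zero =>
    intro v h
    have : v = T.root := depth_zero_eq_root T v (by omega)
    subst this
    rw [dtr_root]; rfl
  | succ n ih =>
    intro v h
    by_cases hv : v = T.root
    · subst hv
      rw [dtr_root]
      simp [distAux]
    · have hd := T.depth_parent v hv
      have hle : T.depth (T.parent v) ≤ n := by omega
      have h1 : distAux T len (n+1) v = len v + distAux T len n (T.parent v) := by
        simp [distAux, hv]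
      have h2 : distToRoot T len v
          = len v + distAux T len (T.depth (T.parent v)) (T.parent v) := by
        unfold distToRoot
        rw [hd]
        simp [distAux, hv]
      rw [h1, h2, ih _ hle]
      rfl

lemma dtr_step (v : T.V) (hv : v ≠ T.root) :
    distToRoot T len v = len v + distToRoot T len (T.parent v) := by
  have hd := T.depth_parent v hv
  have : distToRoot T len v
      = len v + distAux T len (T.depth (T.parent v)) (T.parent v) := by
    unfold distToRoot
    rw [hd]; simp [distAux, hv]
  rw [this, distAux_stable T len _ _ le_rfl]

/-- Partial sum of edge lengths going `k` steps up from `v`. -/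
noncomputable def partSum (k : ℕ) (v : T.V) : ℝ :=
  ∑ i ∈ Finset.range k, if T.parent^[i] v = T.root then 0 else len (T.parent^[i] v)

lemma dtr_partSum : ∀ (k : ℕ) (v : T.V),
    distToRoot T len v = partSum T len k v + distToRoot T len (T.parent^[k] v) := by
  intro k v
  induction k with
  | zero => simp [partSum]
  | succ k ih =>
    rw [partSum, Finset.sum_range_succ, Function.iterate_succ_apply']
    set w := T.parent^[k] v with hw
    by_cases hwr : w = T.root
    · rw [hwr, T.parent_root]
      rw [ih, partSum, hwr]
      simp
    · rw [dtr_step T len w hwr] at ih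
      rw [ih, partSum]
      simp [hwr]
      ring

lemma dtr_parent_le (hp : ∀ w, w ≠ T.root → 0 < len w) (w : T.V) :
    distToRoot T len (T.parent w) ≤ distToRoot T len w := by
  by_cases hw : w = T.root
  · rw [hw, T.parent_root]
  · rw [dtr_step T len w hw]
    linarith [hp w hw]

lemma dtr_iter_le (hp : ∀ w, w ≠ T.root → 0 < len w) (m : ℕ) (c : T.V) :
    distToRoot T len (T.parent^[m] c) ≤ distToRoot T len c := by
  induction m with
  | zero => simp
  | succ m ih =>
    rw [Function.iterate_succ_apply']
    exact le_trans (dtr_parent_le T len hp _) ih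

lemma isAnc_root (v : T.V) : IsAnc T T.root v :=
  ⟨T.depth v, iter_depth_root T _ v rfl⟩

lemma anc_exists (u v : T.V) : ∃ k : ℕ, IsAnc T (T.parent^[k] u) v := by
  refine ⟨T.depth u, ?_⟩
  rw [iter_depth_root T _ u rfl]
  exact isAnc_root T v

/-- The (combinatorial) lca step count. -/
noncomputable def lcaK (u v : T.V) : ℕ := Nat.find (anc_exists T u v)

noncomputable def lca (u v : T.V) : T.V := T.parent^[lcaK T u v] u

lemma sSup_anc_eq (hp : ∀ w, w ≠ T.root → 0 < len w) (u v : T.V) :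
    sSup (distToRoot T len '' {a : T.V | IsAnc T a u ∧ IsAnc T a v})
      = distToRoot T len (lca T u v) := by
  have hcv : IsAnc T (lca T u v) v := Nat.find_spec (anc_exists T u v)
  have hcu : IsAnc T (lca T u v) u := ⟨lcaK T u v, rfl⟩
  have hmem : distToRoot T len (lca T u v)
      ∈ distToRoot T len '' {a : T.V | IsAnc T a u ∧ IsAnc T a v} :=
    ⟨lca T u v, ⟨hcu, hcv⟩, rfl⟩
  have hub : ∀ x ∈ distToRoot T len '' {a : T.V | IsAnc T a u ∧ IsAnc T a v},
      x ≤ distToRoot T len (lca T u v) := by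
    rintro x ⟨a, ⟨⟨j, hj⟩, hav⟩, rfl⟩
    have hk : lcaK T u v ≤ j := Nat.find_min' (anc_exists T u v) (hj ▸ hav)
    have : a = T.parent^[j - lcaK T u v] (lca T u v) := by
      rw [lca, ← Function.iterate_add_apply, Nat.sub_add_cancel hk, hj]
    rw [this]
    exact dtr_iter_le T len hp _ _
  exact le_antisymm (csSup_le ⟨_, hmem⟩ hub) (le_csSup ⟨_, hub⟩ hmem)

lemma treeDist_eq (hp : ∀ w, w ≠ T.root → 0 < len w) (u v : T.V) :
    ∀ m : ℕ, T.parent^[m] v = lca T u v →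
    treeDist T len u v = partSum T len (lcaK T u v) u + partSum T len m v := by
  intro m hm
  rw [treeDist, sSup_anc_eq T len hp u v]
  have h1 := dtr_partSum T len (lcaK T u v) u
  have h2 := dtr_partSum T len m v
  rw [hm] at h2
  rw [show T.parent^[lcaK T u v] u = lca T u v from rfl] at h1
  rw [h1, h2]; ring

end HSTAux

/-- Rounding every edge length of a rooted tree (satisfying
the half-length condition) down to the nearest power of `2` keeps each
non-root edge at most half as long as its parent edge with the ratio of parent
edge length to child edge length a power of `2`, and distorts the shortest-path
metric by at most a factor of `2`: `d' ≤ d ≤ 2·d'`. -/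
theorem hst_rounding (T : FinRootedTree) (len : T.V → ℝ)
    (hpos : ∀ v, v ≠ T.root → 0 < len v)
    (hhalf : ∀ v, v ≠ T.root → T.parent v ≠ T.root → len v ≤ len (T.parent v) / 2) :
    (∀ v, v ≠ T.root → T.parent v ≠ T.root →
      roundLen len v ≤ roundLen len (T.parent v) / 2 ∧
      ∃ j : ℤ, roundLen len (T.parent v) = 2 ^ j * roundLen len v) ∧
    (∀ u v : T.V,
      treeDist T (roundLen len) u v ≤ treeDist T len u v ∧
      treeDist T len u v ≤ 2 * treeDist T (roundLen len) u v) := by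
  have hrpos : ∀ w : T.V, w ≠ T.root → 0 < roundLen len w := fun w _ =>
    zpow_pos (by norm_num) _
  have hle : ∀ w : T.V, w ≠ T.root → roundLen len w ≤ len w := fun w hw =>
    Int.zpow_log_le_self one_lt_two (hpos w hw)
  have hge : ∀ w : T.V, w ≠ T.root → len w ≤ 2 * roundLen len w := by
    intro w hw
    have h := Int.lt_zpow_succ_log_self (b := 2) one_lt_two (len w)
    push_cast at h
    rw [zpow_add₀ (two_ne_zero) _ 1, zpow_one, mul_comm] at h
    exact h.le
  constructor
  · intro v hv hpv
    set lv := Int.log 2 (len v)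
    set lp := Int.log 2 (len (T.parent v))
    have h1 : (2:ℝ)^lv ≤ len v := Int.zpow_log_le_self one_lt_two (hpos v hv)
    have h3 : len (T.parent v) < 2^(lp+1) := Int.lt_zpow_succ_log_self one_lt_two _
    have hlt : (2:ℝ)^lv < 2^lp := by
      have := hhalf v hv hpv
      have h4 : len (T.parent v) / 2 < 2^(lp+1)/2 := by linarith
      rw [zpow_add₀ (two_ne_zero) lp 1, zpow_one] at h4
      calc (2:ℝ)^lv ≤ len v := h1
        _ ≤ len (T.parent v) / 2 := this
        _ < 2^(lp+1)/2 := by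
            rw [zpow_add₀ (two_ne_zero) lp 1, zpow_one]
            linarith [h3]
        _ = 2^lp := by rw [zpow_add₀ (two_ne_zero) lp 1, zpow_one]; ring
    have hll : lv < lp := (zpow_lt_zpow_iff_right₀ (by norm_num : (1:ℝ) < 2)).mp hlt
    constructor
    · have : (2:ℝ)^lv ≤ 2^(lp - 1) :=
        zpow_le_zpow_right₀ one_le_two (by omega)
      rw [roundLen, roundLen]
      calc (2:ℝ)^lv ≤ 2^(lp-1) := this
        _ = 2^lp/2 := by rw [zpow_sub₀ (two_ne_zero : (2:ℝ) ≠ 0), zpow_one]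
    · exact ⟨lp - lv, by
        rw [roundLen, roundLen, ← zpow_add₀ (two_ne_zero : (2:ℝ) ≠ 0)]
        congr 1
        omega⟩
  · intro u v
    obtain ⟨m, hm⟩ : IsAnc T (lca T u v) v := Nat.find_spec (anc_exists T u v)
    have e1 := treeDist_eq T len hpos u v m hm
    have e2 := treeDist_eq T (roundLen len) hrpos u v m hm
    have key : ∀ (k : ℕ) (w : T.V),
        partSum T (roundLen len) k w ≤ partSum T len k w ∧
        partSum T len k w ≤ 2 * partSum T (roundLen len) k w := by
      intro k w
      constructor
      · apply Finset.sum_le_sum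
        intro i _
        split_ifs with h
        · exact le_refl 0
        · exact hle _ h
      · rw [partSum, partSum, Finset.mul_sum]
        apply Finset.sum_le_sum
        intro i _
        split_ifs with h
        · simp
        · exact hge _ h
    rw [e1, e2]
    obtain ⟨a1, b1⟩ := key (lcaK T u v) u
    obtain ⟨a2, b2⟩ := key m v
    constructor
    · linarith
    · linarith
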